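/- For every n, almost surely E[M_{n+1} | 𝔉_n] = M_n · (1 − 30/γ_{n+1}² + 56/γ_{n+1}³); in particular, since γ_{n+1} ≥ 6, the process (M_n)_{n≥0} is a supermartingale with respect to (𝔉_n). -/

import Mathlib

/-!
Conditionally on `𝔉 n`, the chain makes one of six moves, each landing on an `𝔉 n`-measurable
state, on pairwise disjoint events whose conditional probabilities `x², y², z², 2xy, 2yz, 2zx`
sum to `(x + y + z)² = 1`. Hence these events cover `Ω` almost surely, and `E[M_{n+1} | 𝔉 n]`
is the sum of the six values of the product weighted by their conditional probabilities, which a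
polynomial identity on the simplex reduces to `M_n (1 - 30/γ'² + 56/γ'³)`. The factor is at most
`1` since `γ' ≥ 2`.
-/

open MeasureTheory ProbabilityTheory Filter Set Topology

noncomputable section

/-- `γ_n = γ₀ + 4 n`. -/
def rpsGamma (γ₀ : ℝ) (n : ℕ) : ℝ := γ₀ + 4 * n

/-- The increments to the (unnormalised) degrees of the three types
for each of the six possible transitions. -/
def rpsIncr : Fin 6 → ℝ × ℝ × ℝ
  | 0 => (4, 0, 0)
  | 1 => (0, 4, 0)
  | 2 => (0, 0, 4)
  | 3 => (1, 3, 0)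
  | 4 => (0, 1, 3)
  | 5 => (3, 0, 1)

/-- The conditional probability of each of the six possible transitions,
as a function of the current state `(x, y, z)`. -/
def rpsProb (i : Fin 6) (x y z : ℝ) : ℝ :=
  match i with
  | 0 => x ^ 2
  | 1 => y ^ 2
  | 2 => z ^ 2
  | 3 => 2 * x * y
  | 4 => 2 * y * z
  | 5 => 2 * z * x

/-- The rock–paper–scissors preferential attachment chain: an adapted process
`(X n, Y n, Z n)` with values in the simplex `Δ²`, deterministic strictly positive initial
condition and, conditionally on `𝔉 n`, the six possible transitions have the prescribed
probabilities. -/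
structure RPSChain {Ω : Type*} [MeasurableSpace Ω] (μ : Measure Ω) (γ₀ : ℝ) where
  F : Filtration ℕ ‹MeasurableSpace Ω›
  X : ℕ → Ω → ℝ
  Y : ℕ → Ω → ℝ
  Z : ℕ → Ω → ℝ
  adapted_X : Adapted F X
  adapted_Y : Adapted F Y
  adapted_Z : Adapted F Z
  nonneg_X : ∀ n ω, 0 ≤ X n ω
  nonneg_Y : ∀ n ω, 0 ≤ Y n ω
  nonneg_Z : ∀ n ω, 0 ≤ Z n ω
  sum_eq_one : ∀ n ω, X n ω + Y n ω + Z n ω = 1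
  init_X_pos : ∀ ω, 0 < X 0 ω
  init_Y_pos : ∀ ω, 0 < Y 0 ω
  init_Z_pos : ∀ ω, 0 < Z 0 ω
  init_X_const : ∀ ω ω', X 0 ω = X 0 ω'
  init_Y_const : ∀ ω ω', Y 0 ω = Y 0 ω'
  init_Z_const : ∀ ω ω', Z 0 ω = Z 0 ω'
  step : ∀ (n : ℕ) (i : Fin 6),
    μ[Set.indicator
        {ω | X (n+1) ω = (rpsGamma γ₀ n * X n ω + (rpsIncr i).1) / rpsGamma γ₀ (n+1) ∧
             Y (n+1) ω = (rpsGamma γ₀ n * Y n ω + (rpsIncr i).2.1) / rpsGamma γ₀ (n+1) ∧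
             Z (n+1) ω = (rpsGamma γ₀ n * Z n ω + (rpsIncr i).2.2) / rpsGamma γ₀ (n+1)}
        (fun _ => (1 : ℝ)) | F n]
      =ᵐ[μ] fun ω => rpsProb i (X n ω) (Y n ω) (Z n ω)

open Function

section PartitionCondExp

variable {Ω ι : Type*} {m m₀ : MeasurableSpace Ω} {μ : Measure Ω} [Fintype ι]
  {A : ι → Set Ω}

theorem ae_exists_mem_of_condExp_indicator [IsProbabilityMeasure μ] (hm : m ≤ m₀)
    (hA : ∀ i, MeasurableSet (A i)) (hdisj : Pairwise (Disjoint on A)) {p : ι → Ω → ℝ}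
    (hp : ∀ i, μ[(A i).indicator (fun _ => (1 : ℝ)) | m] =ᵐ[μ] p i)
    (hsum : ∀ ω, ∑ i, p i ω = 1) :
    ∀ᵐ ω ∂μ, ∃ i, ω ∈ A i := by
  have hp_int : ∀ i, Integrable (p i) μ := fun i => integrable_condExp.congr (hp i)
  have hA_real : ∀ i, μ.real (A i) = ∫ ω, p i ω ∂μ := fun i => by
    rw [← integral_indicator_one (hA i), ← integral_condExp hm]
    exact integral_congr_ae (hp i)
  have hunion : μ.real (⋃ i, A i) = 1 := by
    rw [measureReal_iUnion_fintype hdisj hA, Finset.sum_congr rfl fun i _ => hA_real i,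
      ← integral_finsetSum _ fun i _ => hp_int i]
    simp [hsum]
  have : (⋃ i, A i) ∈ ae μ := by
    rw [mem_ae_iff_prob_eq_one (MeasurableSet.iUnion hA)]
    exact (ENNReal.toReal_eq_one_iff _).1 hunion
  filter_upwards [this] with ω hω using Set.mem_iUnion.1 hω

theorem eventuallyEq_sum_indicator_of_ae_exists_mem (hdisj : Pairwise (Disjoint on A))
    (hcover : ∀ᵐ ω ∂μ, ∃ i, ω ∈ A i) {f : Ω → ℝ} {g : ι → Ω → ℝ}
    (hfg : ∀ i, ∀ ω ∈ A i, f ω = g i ω) :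
    f =ᵐ[μ] ∑ i, (A i).indicator (g i) := by
  filter_upwards [hcover] with ω ⟨i, hi⟩
  rw [Finset.sum_apply, Finset.sum_eq_single_of_mem i (Finset.mem_univ i)
    fun j _ hji => Set.indicator_of_notMem ((hdisj hji).symm.notMem_of_mem_left hi) _,
    Set.indicator_of_mem hi, hfg i ω hi]

theorem condExp_sum_indicator_of_stronglyMeasurable [IsFiniteMeasure μ] (hm : m ≤ m₀)
    (hA : ∀ i, MeasurableSet (A i)) {g : ι → Ω → ℝ} (hg : ∀ i, StronglyMeasurable[m] (g i))
    (hg_bdd : ∀ i, ∃ C, ∀ ω, |g i ω| ≤ C) :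
    μ[∑ i, (A i).indicator (g i) | m]
      =ᵐ[μ] ∑ i, g i * μ[(A i).indicator (fun _ => (1 : ℝ)) | m] := by
  have hind : ∀ i, (A i).indicator (g i) = g i * (A i).indicator (fun _ => (1 : ℝ)) :=
    fun i => funext fun ω => by simpa using Set.indicator_mul_right (A i) (g i) (fun _ => (1 : ℝ))
  have hint : ∀ i, Integrable ((A i).indicator (g i)) μ := fun i => by
    obtain ⟨C, hC⟩ := hg_bdd i
    exact (Integrable.of_bound ((hg i).mono hm).aestronglyMeasurable C
      (ae_of_all _ fun ω => hC ω)).indicator (hA i)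
  refine (condExp_finsetSum (fun i _ => hint i) m).trans ?_
  refine eventuallyEq_sum fun i _ => ?_
  rw [hind i]
  exact condExp_mul_of_stronglyMeasurable_left (hg i) (hind i ▸ hint i)
    ((integrable_const 1).indicator (hA i))

theorem condExp_ae_eq_sum_mul_of_eq_on_cells [IsProbabilityMeasure μ] (hm : m ≤ m₀)
    (hA : ∀ i, MeasurableSet (A i)) (hdisj : Pairwise (Disjoint on A)) {p : ι → Ω → ℝ}
    (hp : ∀ i, μ[(A i).indicator (fun _ => (1 : ℝ)) | m] =ᵐ[μ] p i)
    (hsum : ∀ ω, ∑ i, p i ω = 1) {g : ι → Ω → ℝ} (hg : ∀ i, StronglyMeasurable[m] (g i))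
    (hg_bdd : ∀ i, ∃ C, ∀ ω, |g i ω| ≤ C) {f : Ω → ℝ} (hfg : ∀ i, ∀ ω ∈ A i, f ω = g i ω) :
    μ[f | m] =ᵐ[μ] ∑ i, g i * p i :=
  calc μ[f | m]
      =ᵐ[μ] μ[∑ i, (A i).indicator (g i) | m] := condExp_congr_ae <|
        eventuallyEq_sum_indicator_of_ae_exists_mem hdisj
          (ae_exists_mem_of_condExp_indicator hm hA hdisj hp hsum) hfg
    _ =ᵐ[μ] ∑ i, g i * μ[(A i).indicator (fun _ => (1 : ℝ)) | m] :=
        condExp_sum_indicator_of_stronglyMeasurable hm hA hg hg_bdd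
    _ =ᵐ[μ] ∑ i, g i * p i := eventuallyEq_sum fun i _ => (hp i).mul_left

end PartitionCondExp

lemma rpsGamma_succ (γ₀ : ℝ) (n : ℕ) : rpsGamma γ₀ (n + 1) = rpsGamma γ₀ n + 4 := by
  simp only [rpsGamma]; push_cast; ring

lemma rpsGamma_two_le {γ₀ : ℝ} (hγ₀ : 2 ≤ γ₀) (n : ℕ) : 2 ≤ rpsGamma γ₀ n := by
  have : (0 : ℝ) ≤ 4 * n := by positivity
  simp only [rpsGamma]; linarith

lemma rpsGamma_pos {γ₀ : ℝ} (hγ₀ : 2 ≤ γ₀) (n : ℕ) : 0 < rpsGamma γ₀ n :=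
  two_pos.trans_le (rpsGamma_two_le hγ₀ n)

lemma rpsIncr_injective : Injective rpsIncr := by
  intro i j h
  fin_cases i <;> fin_cases j <;> simp_all [rpsIncr, Prod.ext_iff]

lemma rpsIncr_mem_Icc (i : Fin 6) :
    (rpsIncr i).1 ∈ Icc (0 : ℝ) 4 ∧ (rpsIncr i).2.1 ∈ Icc (0 : ℝ) 4 ∧
      (rpsIncr i).2.2 ∈ Icc (0 : ℝ) 4 := by
  fin_cases i <;> norm_num [rpsIncr]

lemma sum_rpsProb {x y z : ℝ} (h : x + y + z = 1) : ∑ i, rpsProb i x y z = 1 := by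
  simp only [Fin.sum_univ_six, rpsProb]
  linear_combination (x + y + z + 1) * h

def rpsUpdate (γ₀ : ℝ) (n : ℕ) (x a : ℝ) : ℝ := (rpsGamma γ₀ n * x + a) / rpsGamma γ₀ (n + 1)

lemma rpsUpdate_injective {γ₀ : ℝ} {n : ℕ} (hγ : rpsGamma γ₀ (n + 1) ≠ 0) (x : ℝ) :
    Injective (rpsUpdate γ₀ n x) := fun a b h => by
  simpa [rpsUpdate, div_left_inj' hγ] using h

lemma rpsUpdate_mem_Icc {γ₀ : ℝ} (hγ₀ : 0 ≤ γ₀) (n : ℕ) {x a : ℝ} (hx : x ∈ Icc 0 1)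
    (ha : a ∈ Icc 0 4) : rpsUpdate γ₀ n x a ∈ Icc 0 1 := by
  have hγ : 0 ≤ rpsGamma γ₀ n := by unfold rpsGamma; positivity
  have hγ' : 0 < rpsGamma γ₀ (n + 1) := by rw [rpsGamma_succ]; linarith
  obtain ⟨hx0, hx1⟩ := hx
  obtain ⟨ha0, ha4⟩ := ha
  refine ⟨by unfold rpsUpdate; positivity, ?_⟩
  rw [rpsUpdate, div_le_one hγ', rpsGamma_succ]
  nlinarith

lemma sum_rpsUpdate_mul_rpsProb {γ₀ : ℝ} {n : ℕ} (hγ : rpsGamma γ₀ (n + 1) ≠ 0)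
    {x y z : ℝ} (h : x + y + z = 1) :
    ∑ i, rpsUpdate γ₀ n x (rpsIncr i).1 * rpsUpdate γ₀ n y (rpsIncr i).2.1 *
        rpsUpdate γ₀ n z (rpsIncr i).2.2 * rpsProb i x y z
      = x * y * z * (1 - 30 / rpsGamma γ₀ (n + 1) ^ 2 + 56 / rpsGamma γ₀ (n + 1) ^ 3) := by
  obtain rfl : z = 1 - x - y := by linarith
  rw [rpsGamma_succ] at hγ ⊢
  simp only [rpsUpdate, rpsGamma_succ, Fin.sum_univ_six, rpsProb, rpsIncr]
  field_simp
  ring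

lemma rps_factor_le_one {g : ℝ} (hg : 2 ≤ g) : 1 - 30 / g ^ 2 + 56 / g ^ 3 ≤ 1 := by
  have : 56 / g ^ 3 ≤ 30 / g ^ 2 := by
    rw [div_le_div_iff₀ (by positivity) (by positivity)]
    nlinarith [pow_pos (two_pos.trans_le hg) 2]
  linarith

namespace RPSChain

variable {Ω : Type*} [MeasurableSpace Ω] {μ : Measure Ω} {γ₀ : ℝ} (c : RPSChain μ γ₀)

lemma X_mem_Icc (n : ℕ) (ω : Ω) : c.X n ω ∈ Icc 0 1 :=
  ⟨c.nonneg_X n ω, by linarith [c.sum_eq_one n ω, c.nonneg_Y n ω, c.nonneg_Z n ω]⟩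

lemma Y_mem_Icc (n : ℕ) (ω : Ω) : c.Y n ω ∈ Icc 0 1 :=
  ⟨c.nonneg_Y n ω, by linarith [c.sum_eq_one n ω, c.nonneg_X n ω, c.nonneg_Z n ω]⟩

lemma Z_mem_Icc (n : ℕ) (ω : Ω) : c.Z n ω ∈ Icc 0 1 :=
  ⟨c.nonneg_Z n ω, by linarith [c.sum_eq_one n ω, c.nonneg_X n ω, c.nonneg_Y n ω]⟩

lemma prod_mem_Icc (n : ℕ) (ω : Ω) : c.X n ω * c.Y n ω * c.Z n ω ∈ Icc 0 1 := by
  obtain ⟨hx0, hx1⟩ := c.X_mem_Icc n ω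
  obtain ⟨hy0, hy1⟩ := c.Y_mem_Icc n ω
  obtain ⟨hz0, hz1⟩ := c.Z_mem_Icc n ω
  exact ⟨by positivity, mul_le_one₀ (mul_le_one₀ hx1 hy0 hy1) hz0 hz1⟩

def moveEvent (n : ℕ) (i : Fin 6) : Set Ω :=
  {ω | c.X (n + 1) ω = rpsUpdate γ₀ n (c.X n ω) (rpsIncr i).1 ∧
    c.Y (n + 1) ω = rpsUpdate γ₀ n (c.Y n ω) (rpsIncr i).2.1 ∧
    c.Z (n + 1) ω = rpsUpdate γ₀ n (c.Z n ω) (rpsIncr i).2.2}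

def prodAfterMove (n : ℕ) (i : Fin 6) (ω : Ω) : ℝ :=
  rpsUpdate γ₀ n (c.X n ω) (rpsIncr i).1 * rpsUpdate γ₀ n (c.Y n ω) (rpsIncr i).2.1 *
    rpsUpdate γ₀ n (c.Z n ω) (rpsIncr i).2.2

lemma measurableSet_moveEvent (n : ℕ) (i : Fin 6) : MeasurableSet (c.moveEvent n i) := by
  have hX : ∀ k, Measurable (c.X k) := fun k => (c.adapted_X k).mono (c.F.le k) le_rfl
  have hY : ∀ k, Measurable (c.Y k) := fun k => (c.adapted_Y k).mono (c.F.le k) le_rfl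
  have hZ : ∀ k, Measurable (c.Z k) := fun k => (c.adapted_Z k).mono (c.F.le k) le_rfl
  unfold moveEvent rpsUpdate
  refine (measurableSet_eq_fun (hX _) ?_).inter
    ((measurableSet_eq_fun (hY _) ?_).inter (measurableSet_eq_fun (hZ _) ?_)) <;>
  fun_prop

lemma pairwise_disjoint_moveEvent (hγ₀ : 2 ≤ γ₀) (n : ℕ) :
    Pairwise (Disjoint on c.moveEvent n) := by
  intro i j hij
  refine Set.disjoint_left.2 fun ω ⟨hi₁, hi₂, hi₃⟩ ⟨hj₁, hj₂, hj₃⟩ => hij (rpsIncr_injective ?_)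
  have hinj := rpsUpdate_injective (rpsGamma_pos hγ₀ (n + 1)).ne'
  exact Prod.ext (hinj _ (hi₁.symm.trans hj₁))
    (Prod.ext (hinj _ (hi₂.symm.trans hj₂)) (hinj _ (hi₃.symm.trans hj₃)))

lemma stronglyMeasurable_prodAfterMove (n : ℕ) (i : Fin 6) :
    StronglyMeasurable[c.F n] (c.prodAfterMove n i) := by
  have hX := c.adapted_X n
  have hY := c.adapted_Y n
  have hZ := c.adapted_Z n
  unfold prodAfterMove rpsUpdate
  exact Measurable.stronglyMeasurable (by fun_prop)

lemma abs_prodAfterMove_le_one (hγ₀ : 2 ≤ γ₀) (n : ℕ) (i : Fin 6) (ω : Ω) :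
    |c.prodAfterMove n i ω| ≤ 1 := by
  have hγ₀' : 0 ≤ γ₀ := by linarith
  obtain ⟨ha, hb, hc⟩ := rpsIncr_mem_Icc i
  obtain ⟨hx0, hx1⟩ := rpsUpdate_mem_Icc hγ₀' n (c.X_mem_Icc n ω) ha
  obtain ⟨hy0, hy1⟩ := rpsUpdate_mem_Icc hγ₀' n (c.Y_mem_Icc n ω) hb
  obtain ⟨hz0, hz1⟩ := rpsUpdate_mem_Icc hγ₀' n (c.Z_mem_Icc n ω) hc
  rw [prodAfterMove, abs_of_nonneg (by positivity)]
  exact mul_le_one₀ (mul_le_one₀ hx1 hy0 hy1) hz0 hz1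

lemma prod_succ_eq_prodAfterMove {n : ℕ} {i : Fin 6} {ω : Ω} (h : ω ∈ c.moveEvent n i) :
    c.X (n + 1) ω * c.Y (n + 1) ω * c.Z (n + 1) ω = c.prodAfterMove n i ω := by
  obtain ⟨hx, hy, hz⟩ := h
  rw [prodAfterMove, hx, hy, hz]

theorem condExp_prod_succ [IsProbabilityMeasure μ] (hγ₀ : 2 ≤ γ₀) (n : ℕ) :
    μ[fun ω => c.X (n + 1) ω * c.Y (n + 1) ω * c.Z (n + 1) ω | c.F n]
      =ᵐ[μ] fun ω => (c.X n ω * c.Y n ω * c.Z n ω) *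
        (1 - 30 / (rpsGamma γ₀ (n + 1)) ^ 2 + 56 / (rpsGamma γ₀ (n + 1)) ^ 3) := by
  have hcells := condExp_ae_eq_sum_mul_of_eq_on_cells (c.F.le n) (c.measurableSet_moveEvent n)
    (c.pairwise_disjoint_moveEvent hγ₀ n) (c.step n) (fun ω => sum_rpsProb (c.sum_eq_one n ω))
    (c.stronglyMeasurable_prodAfterMove n) (fun i => ⟨1, c.abs_prodAfterMove_le_one hγ₀ n i⟩)
    fun _ _ => c.prod_succ_eq_prodAfterMove
  filter_upwards [hcells] with ω hω
  rw [hω]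
  simpa only [Finset.sum_apply, Pi.mul_apply, prodAfterMove] using
    sum_rpsUpdate_mul_rpsProb (rpsGamma_pos hγ₀ (n + 1)).ne' (c.sum_eq_one n ω)

lemma stronglyAdapted_prod : StronglyAdapted c.F fun n ω => c.X n ω * c.Y n ω * c.Z n ω :=
  fun n => (((c.adapted_X n).mul (c.adapted_Y n)).mul (c.adapted_Z n)).stronglyMeasurable

lemma integrable_prod [IsFiniteMeasure μ] (n : ℕ) :
    Integrable (fun ω => c.X n ω * c.Y n ω * c.Z n ω) μ :=
  .of_bound ((c.stronglyAdapted_prod n).mono (c.F.le n)).aestronglyMeasurable 1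
    (ae_of_all _ fun ω => by
      obtain ⟨h0, h1⟩ := c.prod_mem_Icc n ω
      rwa [Real.norm_eq_abs, abs_of_nonneg h0])

end RPSChain

/-- For every `n`, almost surely
`E[M_{n+1} | 𝔉_n] = M_n (1 - 30/γ_{n+1}² + 56/γ_{n+1}³)`;
in particular `(M_n)` is a supermartingale. -/
theorem rps_condexp_formula_and_supermartingale
    {Ω : Type*} [MeasurableSpace Ω] (μ : Measure Ω) [IsProbabilityMeasure μ]
    (γ₀ : ℝ) (hγ₀ : 2 ≤ γ₀) (c : RPSChain μ γ₀) :
    (∀ n : ℕ,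
      μ[fun ω => c.X (n+1) ω * c.Y (n+1) ω * c.Z (n+1) ω | c.F n]
        =ᵐ[μ] fun ω => (c.X n ω * c.Y n ω * c.Z n ω) *
          (1 - 30 / (rpsGamma γ₀ (n+1)) ^ 2 + 56 / (rpsGamma γ₀ (n+1)) ^ 3)) ∧
    Supermartingale (fun n ω => c.X n ω * c.Y n ω * c.Z n ω) c.F μ := by
  refine ⟨c.condExp_prod_succ hγ₀, supermartingale_nat c.stronglyAdapted_prod c.integrable_prod
    fun n => ?_⟩
  filter_upwards [c.condExp_prod_succ hγ₀ n] with ω hω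
  rw [hω]
  exact mul_le_of_le_one_right (c.prod_mem_Icc n ω).1
    (rps_factor_le_one (rpsGamma_two_le hγ₀ (n + 1)))
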